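/- arXiv:1905.01736 — 3 statements merged into one kernel-verified Lean document; each statement's English description precedes it below -/
import Mathlib

section
/- Let π : Fin p → ℝ be a probability vector (πᵢ ≥ 0, Σᵢ πᵢ = 1) and c : Fin p → ℝ with cᵢ > 0 for all i. Set λ* = Σⱼ πⱼ·cⱼ and define αᵢ = πᵢ·cᵢ/λ*. Then for every t ≥ 0: Σᵢ πᵢ·exp(−cᵢ·t) ≥ Σᵢ αᵢ·exp(−cᵢ·t). -/
/-!
Chebyshev's sum inequality under the weights `π`: the rates `cᵢ` and the survival factors
`exp (-cᵢ t)` are oppositely ordered, so `E_π[c · e^{-ct}] ≤ E_π[c] · E_π[e^{-ct}]`.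
Dividing by `λ* = E_π[c]` turns the left side into `Σᵢ αᵢ e^{-cᵢ t}`.
-/

open Finset

theorem AntivaryOn.weighted_card_mul_sum_le_sum_mul_sum {ι α : Type*}
    [CommRing α] [LinearOrder α] [IsStrictOrderedRing α] {s : Finset ι} {w f g : ι → α}
    (hw : ∀ i ∈ s, 0 ≤ w i) (hfg : AntivaryOn f g s) :
    (∑ i ∈ s, w i) * ∑ i ∈ s, w i * (f i * g i) ≤
      (∑ i ∈ s, w i * f i) * ∑ i ∈ s, w i * g i := by
  have hpairs : ∑ i ∈ s, ∑ j ∈ s, w i * w j * ((f j - f i) * (g j - g i)) ≤ 0 :=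
    sum_nonpos fun i hi => sum_nonpos fun j hj =>
      mul_nonpos_of_nonneg_of_nonpos (mul_nonneg (hw i hi) (hw j hj))
        (hfg.sub_mul_sub_nonpos hi hj)
  have hexpand : ∑ i ∈ s, ∑ j ∈ s, w i * w j * ((f j - f i) * (g j - g i)) =
      2 * ((∑ i ∈ s, w i) * ∑ i ∈ s, w i * (f i * g i)
        - (∑ i ∈ s, w i * f i) * ∑ i ∈ s, w i * g i) := by
    set G : ι → ι → α := fun i j => w i * (w j * (f j * g j))
    set H : ι → ι → α := fun i j => w i * f i * (w j * g j)
    calc _ = ∑ i ∈ s, ∑ j ∈ s, (G i j + G j i - H i j - H j i) := by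
          refine sum_congr rfl fun i _ => sum_congr rfl fun j _ => ?_
          simp only [G, H]
          ring
      _ = _ := by
          simp only [sum_add_distrib, sum_sub_distrib]
          rw [sum_comm (f := fun i j => G j i), sum_comm (f := fun i j => H j i)]
          simp only [G, H, sum_mul_sum]
          ring
  linarith

/-- For a probability vector `π` and positive rates `c`, with `λ* = Σⱼ πⱼcⱼ`
and `αᵢ = πᵢcᵢ/λ*`, for every `t ≥ 0`: `Σᵢ πᵢe^{−cᵢt} ≥ Σᵢ αᵢe^{−cᵢt}`. -/
theorem stmt_7 {p : ℕ} (π c : Fin p → ℝ)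
    (hπ_nonneg : ∀ i, 0 ≤ π i) (hπ_sum : ∑ i, π i = 1)
    (hc : ∀ i, 0 < c i) (t : ℝ) (ht : 0 ≤ t) :
    ∑ i, π i * Real.exp (-(c i) * t) ≥
      ∑ i, (π i * c i / (∑ j, π j * c j)) * Real.exp (-(c i) * t) := by
  have hrate : 0 < ∑ j, π j * c j := by
    obtain ⟨i, -, hi⟩ := exists_lt_of_sum_lt (s := univ) (f := 0) (g := π) (by simp [hπ_sum])
    exact sum_pos' (fun j _ => mul_nonneg (hπ_nonneg j) (hc j).le)
      ⟨i, mem_univ i, mul_pos hi (hc i)⟩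
  have hanti : Antivary c (fun i => Real.exp (-(c i) * t)) :=
    ((monovary_self c).comp_antitone_left (f' := fun x => Real.exp (-x * t))
      fun x y hxy => Real.exp_le_exp.2 (by nlinarith)).symm
  have hcheb := AntivaryOn.weighted_card_mul_sum_le_sum_mul_sum (s := univ)
    (fun i _ => hπ_nonneg i) (hanti.antivaryOn _)
  rw [hπ_sum, one_mul] at hcheb
  simp_rw [ge_iff_le, div_mul_eq_mul_div, ← sum_div, div_le_iff₀ hrate, mul_assoc]
  linarith
end

section
/- Let σ₁, σ₂ > 0 and λ₁, λ₂ ≥ 0 with λ₁σ₂ + λ₂σ₁ > 0. Let Q be the 2×2 matrix with rows (−σ₁, σ₁) and (σ₂, −σ₂), D = diag(λ₁, λ₂), π = (σ₂/(σ₁+σ₂), σ₁/(σ₁+σ₂)), λ* = π·D·𝟏, and J = 𝟏·π (the matrix whose rows both equal π). Then J − Q is invertible and d² := 1 + (2/λ*)·π·D·((J − Q)⁻¹ − J)·D·𝟏 = 1 + 2σ₁σ₂(λ₁−λ₂)² / ((σ₁+σ₂)²·(λ₁σ₂ + λ₂σ₁)); in particular d² ≥ 1, with equality if and only if λ₁ =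 λ₂. -/
/-!
For two states the generator is a multiple of a complementary projection:
`Q = -s • (1 - J)` with `s = σ₁ + σ₂` and `J = 𝟏π` idempotent. Hence `J - Q = J + s • (1 - J)`
inverts to `J + s⁻¹ • (1 - J)`, the deviation matrix is `s⁻¹ • (1 - J)`, and
`π D D_Q^♯ D 𝟏 = s⁻¹ · Var_π(λ)`, the variance of the rate under the stationary law.
For the two-point law `(σ₂/s, σ₁/s)` on `{λ₁, λ₂}` that variance is `σ₁σ₂(λ₁ - λ₂)²/s²`.
-/

open Matrix

theorem IsIdempotentElem.add_smul_one_sub_mul_add_inv_smul_one_sub {K A : Type*} [Field K]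
    [Ring A] [Algebra K A] {P : A} (hP : IsIdempotentElem P) {c : K} (hc : c ≠ 0) :
    (P + c • (1 - P)) * (P + c⁻¹ • (1 - P)) = 1 := by
  simp only [add_mul, mul_add, mul_smul_comm, smul_mul_assoc, smul_smul, hP.eq,
    hP.mul_one_sub_self, hP.one_sub_mul_self, hP.one_sub.eq, inv_mul_cancel₀ hc, smul_zero,
    one_smul, add_zero, zero_add, add_sub_cancel]

def weightedVariance {n K : Type*} [Fintype n] [Field K] (π d : n → K) : K :=
  (π * d) ⬝ᵥ d - (π ⬝ᵥ d) ^ 2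

theorem weightedVariance_vecCons_two {K : Type*} [Field K] {p q : K} (hpq : p + q = 1)
    (a b : K) : weightedVariance ![p, q] ![a, b] = p * q * (a - b) ^ 2 := by
  simp only [weightedVariance, dotProduct, Fin.sum_univ_two, Pi.mul_apply, cons_val_zero,
    cons_val_one]
  linear_combination -(p * a ^ 2 + q * b ^ 2) * hpq

namespace Matrix

variable {n K : Type*} [Fintype n] [Field K]

theorem isUnit_det_add_smul_one_sub [DecidableEq n] {P : Matrix n n K} (hP : IsIdempotentElem P)
    {c : K} (hc : c ≠ 0) : IsUnit (P + c • (1 - P)).det :=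
  isUnit_det_of_right_inverse (hP.add_smul_one_sub_mul_add_inv_smul_one_sub hc)

theorem inv_add_smul_one_sub [DecidableEq n] {P : Matrix n n K} (hP : IsIdempotentElem P)
    {c : K} (hc : c ≠ 0) : (P + c • (1 - P))⁻¹ = P + c⁻¹ • (1 - P) :=
  inv_eq_right_inv (hP.add_smul_one_sub_mul_add_inv_smul_one_sub hc)

theorem isIdempotentElem_replicateRow {π : n → K} (hπ : ∑ j, π j = 1) :
    IsIdempotentElem (replicateRow n π) := by
  ext i j
  simp [mul_apply, ← Finset.sum_mul, hπ]

theorem vecMul_diagonal_mul_mul_diagonal_dotProduct_one [DecidableEq n] (π d : n → K)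
    (M : Matrix n n K) : (π ᵥ* (diagonal d * M * diagonal d)) ⬝ᵥ 1 = (π * d) ⬝ᵥ (M *ᵥ d) := by
  have hπ : π ᵥ* diagonal d = π * d := funext (vecMul_diagonal π d)
  have hd : diagonal d *ᵥ 1 = d := funext fun i => by simp [mulVec_diagonal]
  rw [← dotProduct_mulVec, ← mulVec_mulVec, ← mulVec_mulVec, dotProduct_mulVec, hπ, hd]

theorem mul_dotProduct_one_sub_replicateRow_mulVec [DecidableEq n] (π d : n → K) :
    (π * d) ⬝ᵥ ((1 - replicateRow n π) *ᵥ d) = weightedVariance π d := by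
  rw [sub_mulVec, one_mulVec, dotProduct_sub, replicateRow_mulVec_eq_const]
  simp only [weightedVariance, dotProduct, Function.const_apply, Pi.mul_apply,
    ← Finset.sum_mul, sq]

end Matrix

theorem mmpp2_generator_eq_neg_smul_one_sub_replicateRow {K : Type*} [Field K] {σ₁ σ₂ : K}
    (hs : σ₁ + σ₂ ≠ 0) :
    !![-σ₁, σ₁; σ₂, -σ₂] =
      -(σ₁ + σ₂) • (1 - replicateRow (Fin 2) ![σ₂ / (σ₁ + σ₂), σ₁ / (σ₁ + σ₂)]) := by
  ext i j
  fin_cases i <;> fin_cases j <;> simp <;> field_simp <;> ring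

theorem stmt_11_general (σ₁ σ₂ lam₁ lam₂ : ℝ) (hσ₁ : 0 < σ₁) (hσ₂ : 0 < σ₂)
    (hpos : 0 < lam₁ * σ₂ + lam₂ * σ₁)
    (Q : Matrix (Fin 2) (Fin 2) ℝ) (hQ : Q = !![-σ₁, σ₁; σ₂, -σ₂])
    (D : Matrix (Fin 2) (Fin 2) ℝ) (hD : D = Matrix.diagonal ![lam₁, lam₂])
    (π : Fin 2 → ℝ) (hπ : π = ![σ₂ / (σ₁ + σ₂), σ₁ / (σ₁ + σ₂)])
    (lamStar : ℝ) (hlamStar : lamStar = (π ᵥ* D) ⬝ᵥ (1 : Fin 2 → ℝ))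
    (J : Matrix (Fin 2) (Fin 2) ℝ) (hJ : J = Matrix.of fun _ j => π j) :
    IsUnit (J - Q).det ∧
      1 + (2 / lamStar) * ((π ᵥ* (D * ((J - Q)⁻¹ - J) * D)) ⬝ᵥ (1 : Fin 2 → ℝ)) =
        1 + 2 * σ₁ * σ₂ * (lam₁ - lam₂) ^ 2 /
          ((σ₁ + σ₂) ^ 2 * (lam₁ * σ₂ + lam₂ * σ₁)) ∧
      1 ≤ 1 + (2 / lamStar) * ((π ᵥ* (D * ((J - Q)⁻¹ - J) * D)) ⬝ᵥ (1 : Fin 2 → ℝ)) ∧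
      (1 + (2 / lamStar) * ((π ᵥ* (D * ((J - Q)⁻¹ - J) * D)) ⬝ᵥ (1 : Fin 2 → ℝ)) = 1 ↔
        lam₁ = lam₂) := by
  have hs : 0 < σ₁ + σ₂ := add_pos hσ₁ hσ₂
  have hπ_sum : σ₂ / (σ₁ + σ₂) + σ₁ / (σ₁ + σ₂) = 1 := by
    rw [← add_div, add_comm, div_self hs.ne']
  replace hJ : J = replicateRow (Fin 2) π := hJ
  have hJ_idem : IsIdempotentElem J :=
    hJ ▸ isIdempotentElem_replicateRow (by simpa [hπ, Fin.sum_univ_two] using hπ_sum)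
  have hJQ : J - Q = J + (σ₁ + σ₂) • (1 - J) := by
    rw [hQ, mmpp2_generator_eq_neg_smul_one_sub_replicateRow hs.ne', ← hπ, ← hJ, neg_smul,
      sub_neg_eq_add]
  have hdev : (J - Q)⁻¹ - J = (σ₁ + σ₂)⁻¹ • (1 - J) := by
    rw [hJQ, inv_add_smul_one_sub hJ_idem hs.ne', add_sub_cancel_left]
  have hquad : (π ᵥ* (D * ((J - Q)⁻¹ - J) * D)) ⬝ᵥ 1 =
      (σ₁ + σ₂)⁻¹ * (σ₂ / (σ₁ + σ₂) * (σ₁ / (σ₁ + σ₂)) * (lam₁ - lam₂) ^ 2) := by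
    rw [hdev, hD, vecMul_diagonal_mul_mul_diagonal_dotProduct_one, smul_mulVec,
      dotProduct_smul, hJ, mul_dotProduct_one_sub_replicateRow_mulVec, hπ,
      weightedVariance_vecCons_two hπ_sum, smul_eq_mul]
  have hlamStar' : lamStar = (lam₁ * σ₂ + lam₂ * σ₁) / (σ₁ + σ₂) := by
    rw [hlamStar, hπ, hD]
    simp only [dotProduct_one, vecMul_diagonal, Fin.sum_univ_two, cons_val_zero, cons_val_one]
    ring
  have hd2 : 1 + (2 / lamStar) * ((π ᵥ* (D * ((J - Q)⁻¹ - J) * D)) ⬝ᵥ 1) =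
      1 + 2 * σ₁ * σ₂ * (lam₁ - lam₂) ^ 2 / ((σ₁ + σ₂) ^ 2 * (lam₁ * σ₂ + lam₂ * σ₁)) := by
    rw [hquad, hlamStar']
    field_simp
  refine ⟨hJQ ▸ isUnit_det_add_smul_one_sub hJ_idem hs.ne', hd2, ?_, ?_⟩
  · rw [hd2]
    exact le_add_of_nonneg_right (div_nonneg (by positivity) (mul_nonneg (by positivity) hpos.le))
  · rw [hd2, add_eq_left]
    simp [hσ₁.ne', hσ₂.ne', hs.ne', hpos.ne', sub_eq_zero]

/-- For an MMPP₂ with generator `Q = !![−σ₁, σ₁; σ₂, −σ₂]`,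
`D = diag(λ₁, λ₂)`, `π = (σ₂, σ₁)/(σ₁+σ₂)`, `λ* = π·D·𝟏`, `J = 𝟏·π`: the matrix `J − Q`
is invertible and `d² = 1 + (2/λ*)·π·D·((J−Q)⁻¹ − J)·D·𝟏
= 1 + 2σ₁σ₂(λ₁−λ₂)²/((σ₁+σ₂)²(λ₁σ₂+λ₂σ₁))`; in particular `d² ≥ 1` with equality iff
`λ₁ = λ₂`. -/
theorem stmt_11 (σ₁ σ₂ lam₁ lam₂ : ℝ) (hσ₁ : 0 < σ₁) (hσ₂ : 0 < σ₂)
    (hlam₁ : 0 ≤ lam₁) (hlam₂ : 0 ≤ lam₂) (hpos : 0 < lam₁ * σ₂ + lam₂ * σ₁)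
    (Q : Matrix (Fin 2) (Fin 2) ℝ) (hQ : Q = !![-σ₁, σ₁; σ₂, -σ₂])
    (D : Matrix (Fin 2) (Fin 2) ℝ) (hD : D = Matrix.diagonal ![lam₁, lam₂])
    (π : Fin 2 → ℝ) (hπ : π = ![σ₂ / (σ₁ + σ₂), σ₁ / (σ₁ + σ₂)])
    (lamStar : ℝ) (hlamStar : lamStar = (π ᵥ* D) ⬝ᵥ (1 : Fin 2 → ℝ))
    (J : Matrix (Fin 2) (Fin 2) ℝ) (hJ : J = Matrix.of fun _ j => π j) :
    IsUnit (J - Q).det ∧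
      1 + (2 / lamStar) * ((π ᵥ* (D * ((J - Q)⁻¹ - J) * D)) ⬝ᵥ (1 : Fin 2 → ℝ)) =
        1 + 2 * σ₁ * σ₂ * (lam₁ - lam₂) ^ 2 /
          ((σ₁ + σ₂) ^ 2 * (lam₁ * σ₂ + lam₂ * σ₁)) ∧
      1 ≤ 1 + (2 / lamStar) * ((π ᵥ* (D * ((J - Q)⁻¹ - J) * D)) ⬝ᵥ (1 : Fin 2 → ℝ)) ∧
      (1 + (2 / lamStar) * ((π ᵥ* (D * ((J - Q)⁻¹ - J) * D)) ⬝ᵥ (1 : Fin 2 → ℝ)) = 1 ↔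
        lam₁ = lam₂) :=
  stmt_11_general σ₁ σ₂ lam₁ lam₂ hσ₁ hσ₂ hpos Q hQ D hD π hπ lamStar hlamStar J hJ
end

section
/- Let Q be the 4×4 real matrix with rows (−1,1,0,0), (0,−1,1,0), (0,0,−1,1), (1,0,0,−1), let D = diag(1/100, 1/100, 1, 1), and let C = Q − D. Then C is invertible, and for every probability vector α : Fin 4 → ℝ satisfying α·(−C)⁻¹·D = α, the hazard-rate function h(t) = (α·exp(tC)·D·𝟏)/(α·exp(tC)·𝟏) (with exp the matrix exponential and 𝟏 the all-ones column vector) is NOT antitone on [0, ∞); i.e., there exist 0 ≤ t₁ < t₂ with h(t₁) < h(t₂). -/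
/-!
Since `β Q = 0` forces `β` to be constant for the cyclic generator `Q`, the condition
`α (-C)⁻¹ D = α` says that `α = β D` is proportional to `(1/100, 1/100, 1, 1)`.

The hazard rate is unchanged when `C` is shifted by a multiple of the identity, because
`exp (t • (C - c • 1)) = e^{-tc} • exp (t • C)` and the scalar cancels in the quotient. With
`C = M - 2 • 1` the matrix `M` has ∞-operator norm `199/100` instead of `3`, so short Taylor
polynomials of `exp (t • M)` with a geometric tail bound pin down `h(2) ≈ 0.335` and
`h(3) ≈ 0.358` well enough to separate them, in exact rational arithmetic.
-/

open Matrix NormedSpace Finset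
open scoped Nat

section ExpSeries

variable {𝔸 : Type*} [NormedRing 𝔸] [NormedAlgebra ℝ 𝔸] [NormOneClass 𝔸] [CompleteSpace 𝔸]

theorem norm_exp_sub_sum_range_le (A : 𝔸) {r : ℝ} (hA : ‖A‖ ≤ r) {N : ℕ} (hN : r < N + 1) :
    ‖exp A - ∑ k ∈ range N, (k !⁻¹ : ℝ) • A ^ k‖ ≤ r ^ N / N ! * (1 - r / (N + 1))⁻¹ := by
  have hr : 0 ≤ r := (norm_nonneg A).trans hA
  have hq : 0 ≤ r / (N + 1) := by positivity
  have hq1 : r / (N + 1) < 1 := (div_lt_one (by positivity)).2 hN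
  rw [congrFun (exp_eq_tsum ℝ) A, ← (expSeries_summable' (𝕂 := ℝ) A).sum_add_tsum_nat_add N,
    add_sub_cancel_left]
  refine tsum_of_norm_bounded ((hasSum_geometric_of_lt_one hq hq1).mul_left (r ^ N / N !))
    fun k => ?_
  have hfac : (N ! : ℝ) * (N + 1) ^ k ≤ (k + N)! := by
    rw [add_comm k N]; exact_mod_cast Nat.factorial_mul_pow_le_factorial
  calc ‖((k + N)! : ℝ)⁻¹ • A ^ (k + N)‖ ≤ ((k + N)! : ℝ)⁻¹ * r ^ (k + N) := by
        rw [norm_smul, norm_inv, RCLike.norm_natCast]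
        gcongr
        exact (norm_pow_le A _).trans (pow_le_pow_left₀ (norm_nonneg A) hA _)
    _ ≤ r ^ N / N ! * (r / (N + 1)) ^ k := by
        rw [div_pow, div_mul_div_comm, inv_mul_eq_div, pow_add, mul_comm (r ^ k)]
        gcongr

end ExpSeries

section LinftyOpNorm

variable {m n : Type*} [Fintype m] [Fintype n]

attribute [local instance] Matrix.linftyOpSeminormedAddCommGroup
  Matrix.linftyOpNormedAddCommGroup

theorem linfty_opNorm_le_of_forall_sum_le {E : Type*} [SeminormedAddCommGroup E]
    (A : Matrix m n E) {r : ℝ} (hr : 0 ≤ r) (h : ∀ i, ∑ j, ‖A i j‖ ≤ r) : ‖A‖ ≤ r := by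
  lift r to NNReal using hr
  rw [linfty_opNorm_def, NNReal.coe_le_coe]
  exact Finset.sup_le fun i _ => by simpa [← NNReal.coe_le_coe] using h i

theorem abs_vecMul_dotProduct_le (X : Matrix m n ℝ) {α : m → ℝ} {v : n → ℝ}
    (hα : ∀ i, 0 ≤ α i) (hα1 : ∑ i, α i = 1) (hv : ‖v‖ ≤ 1) : |(α ᵥ* X) ⬝ᵥ v| ≤ ‖X‖ := by
  have hXv : ‖X *ᵥ v‖ ≤ ‖X‖ :=
    (linfty_opNorm_mulVec X v).trans (mul_le_of_le_one_right (norm_nonneg X) hv)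
  rw [← dotProduct_mulVec]
  calc |α ⬝ᵥ (X *ᵥ v)| ≤ ∑ i, α i * |(X *ᵥ v) i| := by
        refine (abs_sum_le_sum_abs _ _).trans_eq (sum_congr rfl fun i _ => ?_)
        rw [abs_mul, abs_of_nonneg (hα i)]
    _ ≤ ∑ i, α i * ‖X‖ := by
        gcongr with i
        · exact hα i
        · exact (norm_le_pi_norm (X *ᵥ v) i).trans hXv
    _ = ‖X‖ := by rw [← sum_mul, hα1, one_mul]

end LinftyOpNorm

section MatrixExp

variable {n : Type*} [Fintype n] [DecidableEq n] [Nonempty n]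

attribute [local instance] Matrix.linftyOpNormedRing Matrix.linftyOpNormedAlgebra
  Matrix.linfty_opNormOneClass

theorem abs_vecMul_exp_dotProduct_sub_le (A : Matrix n n ℝ) {α v : n → ℝ}
    (hα : ∀ i, 0 ≤ α i) (hα1 : ∑ i, α i = 1) (hv : ‖v‖ ≤ 1) {r : ℝ} (hA : ‖A‖ ≤ r) {N : ℕ}
    (hN : r < N + 1) :
    |(α ᵥ* exp A) ⬝ᵥ v - ∑ k ∈ range N, (k !⁻¹ : ℝ) * ((α ᵥ* A ^ k) ⬝ᵥ v)| ≤
      r ^ N / N ! * (1 - r / (N + 1))⁻¹ := by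
  have hlin : (α ᵥ* exp A) ⬝ᵥ v - ∑ k ∈ range N, (k !⁻¹ : ℝ) * ((α ᵥ* A ^ k) ⬝ᵥ v) =
      (α ᵥ* (exp A - ∑ k ∈ range N, (k !⁻¹ : ℝ) • A ^ k)) ⬝ᵥ v := by
    simp only [vecMul_sub, sub_dotProduct, vecMul_sum, sum_dotProduct, vecMul_smul,
      smul_dotProduct, smul_eq_mul]
  rw [hlin]
  exact (abs_vecMul_dotProduct_le _ hα hα1 hv).trans (norm_exp_sub_sum_range_le A hA hN)

end MatrixExp

theorem div_lt_div_of_abs_sub_le {a b c d p q r s ε δ : ℝ} (ha : |a - p| ≤ ε) (hb : |b - q| ≤ ε)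
    (hc : |c - r| ≤ δ) (hd : |d - s| ≤ δ) (hpε : 0 ≤ p + ε) (hqε : ε < q) (hrδ : δ ≤ r)
    (hsδ : δ < s) (h : (p + ε) / (q - ε) < (r - δ) / (s + δ)) : a / b < c / d := by
  rw [abs_sub_le_iff] at ha hb hc hd
  calc a / b ≤ (p + ε) / (q - ε) := div_le_div₀ hpε (by linarith) (by linarith) (by linarith)
    _ < (r - δ) / (s + δ) := h
    _ ≤ c / d := div_le_div₀ (by linarith) (by linarith) (by linarith) (by linarith)

section HazardRate

variable {n : Type*} [Fintype n] [DecidableEq n]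

noncomputable def hazardRate (α : n → ℝ) (C D : Matrix n n ℝ) (t : ℝ) : ℝ :=
  ((α ᵥ* (exp (t • C) * D)) ⬝ᵥ 1) / ((α ᵥ* exp (t • C)) ⬝ᵥ 1)

theorem hazardRate_diagonal (α : n → ℝ) (C : Matrix n n ℝ) (d : n → ℝ) (t : ℝ) :
    hazardRate α C (diagonal d) t = ((α ᵥ* exp (t • C)) ⬝ᵥ d) / ((α ᵥ* exp (t • C)) ⬝ᵥ 1) := by
  rw [hazardRate, ← vecMul_vecMul, ← dotProduct_mulVec]
  congr 2
  ext i
  simp [mulVec_diagonal]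

theorem exp_smul_sub_smul_one (M : Matrix n n ℝ) (c t : ℝ) :
    exp (t • (M - c • 1)) = Real.exp (-(t * c)) • exp (t • M) := by
  have hsplit : t • (M - c • 1) = t • M + (-(t * c)) • (1 : Matrix n n ℝ) := by
    rw [smul_sub, smul_smul, neg_smul, sub_eq_add_neg]
  rw [hsplit, Matrix.exp_add_of_commute _ _ ((Commute.one_right _).smul_right _),
    smul_one_eq_diagonal, Matrix.exp_diagonal, Pi.exp_def, ← Real.exp_eq_exp_ℝ,
    ← smul_one_eq_diagonal, mul_smul_one]

theorem hazardRate_sub_smul_one (α : n → ℝ) (M D : Matrix n n ℝ) (c t : ℝ) :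
    hazardRate α (M - c • 1) D t = hazardRate α M D t := by
  simp only [hazardRate, exp_smul_sub_smul_one, smul_mul, vecMul_smul, smul_dotProduct,
    smul_eq_mul]
  exact mul_div_mul_left _ _ (Real.exp_pos _).ne'

end HazardRate

section EmbeddedChain

variable {n : Type*} [Fintype n] [DecidableEq n]

theorem exists_vecMul_eq_zero_and_vecMul_eq {R : Type*} [CommRing R] {Q D : Matrix n n R}
    (hQD : IsUnit (Q - D).det) {α : n → R} (hα : α ᵥ* ((-(Q - D))⁻¹ * D) = α) :
    ∃ β, β ᵥ* Q = 0 ∧ β ᵥ* D = α := by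
  set β := α ᵥ* (-(Q - D))⁻¹
  have hβD : β ᵥ* D = α := by rwa [vecMul_vecMul]
  have hunit : IsUnit (-(Q - D)).det := by
    rw [det_neg]; exact (isUnit_neg_one.pow _).mul hQD
  have hβ : β ᵥ* (D - Q) = α := by
    rw [← neg_sub, vecMul_vecMul, nonsing_inv_mul _ hunit, vecMul_one]
  refine ⟨β, ?_, hβD⟩
  rw [vecMul_sub, hβD, sub_eq_self] at hβ
  exact hβ

end EmbeddedChain

namespace TelekHorvath

noncomputable def Q : Matrix (Fin 4) (Fin 4) ℝ :=
  !![-1, 1, 0, 0; 0, -1, 1, 0; 0, 0, -1, 1; 1, 0, 0, -1]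

noncomputable def d : Fin 4 → ℝ := ![1/100, 1/100, 1, 1]

noncomputable def D : Matrix (Fin 4) (Fin 4) ℝ := diagonal d

noncomputable def M : Matrix (Fin 4) (Fin 4) ℝ :=
  !![99/100, 1, 0, 0; 0, 99/100, 1, 0; 0, 0, 0, 1; 1, 0, 0, 0]

noncomputable def alpha : Fin 4 → ℝ := ![1/202, 1/202, 50/101, 50/101]

theorem Q_sub_D : Q - D = M - (2 : ℝ) • 1 := by
  ext i j
  fin_cases i <;> fin_cases j <;> norm_num [Q, D, d, M]

theorem isUnit_det_Q_sub_D : IsUnit (Q - D).det := by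
  have hdet : (Q - D).det = 7701 / 2500 := by
    simp [Q, D, d, det_succ_row_zero, Fin.sum_univ_succ, Fin.succAbove]
    norm_num
  rw [hdet]
  exact isUnit_iff_ne_zero.2 (by norm_num)

theorem eq_alpha_of_vecMul_eq_zero {α β : Fin 4 → ℝ} (hQ : β ᵥ* Q = 0) (hD : β ᵥ* D = α)
    (hα : ∑ i, α i = 1) : α = alpha := by
  have hQ' := congrFun hQ
  have hD' := congrFun hD
  simp [Q, D, d, vecMul, dotProduct, Fin.sum_univ_four, Fin.forall_fin_succ] at hQ' hD' hα
  funext i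
  fin_cases i <;> simp [alpha] <;> linarith

section

attribute [local instance] Matrix.linftyOpNormedRing Matrix.linftyOpNormedAlgebra

theorem norm_M_le : ‖M‖ ≤ 199 / 100 :=
  linfty_opNorm_le_of_forall_sum_le M (by norm_num) fun i => by
    fin_cases i <;> norm_num [M, Fin.sum_univ_succ]

theorem hazardRate_two_lt_three : hazardRate alpha M D 2 < hazardRate alpha M D 3 := by
  have hα : ∀ i, 0 ≤ alpha i := fun i => by fin_cases i <;> norm_num [alpha]
  have hα1 : ∑ i, alpha i = 1 := by norm_num [alpha, Fin.sum_univ_succ]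
  have hd : ‖d‖ ≤ 1 :=
    (pi_norm_le_iff_of_nonneg zero_le_one).2 fun i => by fin_cases i <;> norm_num [d]
  have hbound {v : Fin 4 → ℝ} (hv : ‖v‖ ≤ 1) (t : ℝ) (ht : 0 ≤ t) (N : ℕ)
      (hN : 199 / 100 * t < N + 1) :=
    abs_vecMul_exp_dotProduct_sub_le (t • M) hα hα1 hv (r := 199 / 100 * t)
      (by rw [norm_smul, Real.norm_of_nonneg ht, mul_comm]; gcongr; exact norm_M_le) hN
  rw [D, hazardRate_diagonal, hazardRate_diagonal]
  refine div_lt_div_of_abs_sub_le (hbound hd 2 zero_le_two 11 (by norm_num))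
    (hbound norm_one.le 2 zero_le_two 11 (by norm_num))
    (hbound hd 3 zero_le_three 15 (by norm_num))
    (hbound norm_one.le 3 zero_le_three 15 (by norm_num)) ?_ ?_ ?_ ?_ ?_ <;>
  · simp only [sum_range_succ, sum_range_zero, pow_succ, pow_zero, ← vecMul_vecMul, vecMul_one,
      dotProduct_one]
    norm_num [alpha, M, d, cons_vecMul, smul_of, of_apply, Fin.sum_univ_succ, Nat.factorial]

end

end TelekHorvath

/-- Telek–Horváth counter-example: For the 4-state MMPP with cyclic
generator `Q`, `D = diag(1/100, 1/100, 1, 1)` and `C = Q − D`, the matrix `C` is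
invertible, and for every probability vector `α` with `α·(−C)⁻¹·D = α`, the hazard rate
`h(t) = (α·e^{tC}·D·𝟏)/(α·e^{tC}·𝟏)` is not non-increasing on `[0, ∞)`: there exist
`0 ≤ t₁ < t₂` with `h(t₁) < h(t₂)`. -/
theorem stmt_14
    (Q : Matrix (Fin 4) (Fin 4) ℝ)
    (hQ : Q = !![-1, 1, 0, 0; 0, -1, 1, 0; 0, 0, -1, 1; 1, 0, 0, -1])
    (D : Matrix (Fin 4) (Fin 4) ℝ)
    (hD : D = Matrix.diagonal ![1/100, 1/100, 1, 1])
    (C : Matrix (Fin 4) (Fin 4) ℝ) (hC : C = Q - D) :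
    IsUnit C.det ∧
      ∀ α : Fin 4 → ℝ, (∀ i, 0 ≤ α i) → (∑ i, α i = 1) →
        α ᵥ* ((-C)⁻¹ * D) = α →
        ∃ t₁ t₂ : ℝ, 0 ≤ t₁ ∧ t₁ < t₂ ∧
          ((α ᵥ* (NormedSpace.exp (t₁ • C) * D)) ⬝ᵥ (1 : Fin 4 → ℝ)) /
              ((α ᵥ* NormedSpace.exp (t₁ • C)) ⬝ᵥ (1 : Fin 4 → ℝ)) <
            ((α ᵥ* (NormedSpace.exp (t₂ • C) * D)) ⬝ᵥ (1 : Fin 4 → ℝ)) /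
              ((α ᵥ* NormedSpace.exp (t₂ • C)) ⬝ᵥ (1 : Fin 4 → ℝ)) := by
  obtain rfl : Q = TelekHorvath.Q := hQ
  obtain rfl : D = TelekHorvath.D := hD
  subst hC
  refine ⟨TelekHorvath.isUnit_det_Q_sub_D, fun α _ hα1 hα => ?_⟩
  obtain ⟨β, hβQ, hβD⟩ := exists_vecMul_eq_zero_and_vecMul_eq TelekHorvath.isUnit_det_Q_sub_D hα
  obtain rfl := TelekHorvath.eq_alpha_of_vecMul_eq_zero hβQ hβD hα1
  refine ⟨2, 3, zero_le_two, by norm_num, ?_⟩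
  change hazardRate _ (TelekHorvath.Q - TelekHorvath.D) _ 2 < hazardRate _ _ _ 3
  rw [TelekHorvath.Q_sub_D, hazardRate_sub_smul_one, hazardRate_sub_smul_one]
  exact TelekHorvath.hazardRate_two_lt_three
end
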